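/- arXiv:2507.09710 — 2 statements merged into one kernel-verified Lean document; each statement's English description precedes it below -/
import Mathlib

section
/- For r ≥ 1, the number of pairwise inequivalent distinguishing labelings of K_2 using at most c colors is C(c, 2), and hence D(rK_2) = min{ c : C(c,2) ≥ r } for r ≥ 2. -/
open SimpleGraph

/-- `φ` is a distinguishing labeling of `G`: the only automorphism preserving `φ` is the identity. -/
def IsDist {V α : Type*} (G : SimpleGraph V) (φ : V → α) : Prop :=
  ∀ π : G ≃g G, (∀ v, φ (π v) = φ v) → ∀ v, π v = v

/-- The distinguishing number `D(G)`. -/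
noncomputable def distNum {V : Type*} (G : SimpleGraph V) : ℕ :=
  sInf {c : ℕ | ∃ φ : V → Fin c, IsDist G φ}

/-- `S` is a fixing set of `G`. -/
def IsFixingSet {V : Type*} (G : SimpleGraph V) (S : Set V) : Prop :=
  ∀ π : G ≃g G, (∀ v ∈ S, π v = v) → ∀ v, π v = v

/-- The fixing number `Fix(G)`. -/
noncomputable def fixNum {V : Type*} (G : SimpleGraph V) : ℕ :=
  sInf {n : ℕ | ∃ S : Set V, S.ncard = n ∧ IsFixingSet G S}

/-- `D(G, c)`: the number of pairwise inequivalent distinguishing labelings of `G`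
using at most `c` colors. -/
noncomputable def countDist {V : Type*} (G : SimpleGraph V) (c : ℕ) : ℕ :=
  Nat.card (Quot (fun φ ψ : {φ : V → Fin c // IsDist G φ} =>
    ∃ π : G ≃g G, ∀ v, φ.1 v = ψ.1 (π v)))

/-- The disjoint union of `r` copies of `G`. -/
def copies {V : Type*} (r : ℕ) (G : SimpleGraph V) : SimpleGraph (Fin r × V) where
  Adj x y := x.1 = y.1 ∧ G.Adj x.2 y.2
  symm := by
    constructor
    rintro ⟨i, u⟩ ⟨j, v⟩ ⟨h1, h2⟩
    exact ⟨h1.symm, h2.symm⟩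
  loopless := by
    constructor
    rintro ⟨i, u⟩ ⟨-, h⟩
    exact G.irrefl h

/-!
A labeling of a complete graph is distinguishing iff it is injective, and two injective labelings
are equivalent iff they use the same set of colours, so the classes with at most `c` colours are
the `n`-subsets of the colours. An automorphism of `r K_n` permutes the copies; hence a labeling
of `r K_n` is distinguishing iff it is injective on every copy and distinct copies get distinct
colour sets, and such a labeling exists iff `r ≤ C(c, n)`.
-/

open Function Set

section Labelings

variable {V α : Type*}

lemma exists_perm_apply_eq_of_range_eq {f g : V → α} (hf : Injective f) (hg : Injective g)
    (h : range f = range g) : ∃ σ : Equiv.Perm V, ∀ x, g (σ x) = f x :=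
  ⟨(Equiv.ofInjective f hf).trans ((Equiv.setCongr h).trans (Equiv.ofInjective g hg).symm),
    fun x => by simp [Equiv.apply_ofInjective_symm]⟩

lemma exists_injective_range_eq_of_card_eq [Fintype V] {s : Finset α}
    (hs : s.card = Fintype.card V) : ∃ φ : V → α, Injective φ ∧ range φ = s :=
  let e : V ≃ s := Fintype.equivOfCardEq (by rw [Fintype.card_coe, hs])
  ⟨(↑) ∘ e, Subtype.val_injective.comp e.injective,
    by rw [EquivLike.range_comp, Subtype.range_coe]⟩

def colorSet [Fintype V] [DecidableEq α] (φ : V → α) (hφ : Injective φ) :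
    {s : Finset α // s.card = Fintype.card V} :=
  ⟨Finset.univ.image φ, by rw [Finset.card_image_of_injective _ hφ, Finset.card_univ]⟩

lemma colorSet_inj [Fintype V] [DecidableEq α] {φ ψ : V → α} (hφ : Injective φ)
    (hψ : Injective ψ) : colorSet φ hφ = colorSet ψ hψ ↔ range φ = range ψ := by
  simp [colorSet, Subtype.ext_iff, ← Finset.coe_inj]

lemma isDist_top_iff (φ : V → α) : IsDist (⊤ : SimpleGraph V) φ ↔ Injective φ := by
  classical
  refine ⟨fun h x y hxy => ?_, fun h π hπ v => h (hπ v)⟩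
  by_contra hne
  have hswap : ∀ v, φ (Equiv.swap x y v) = φ v := fun v => by
    rw [Equiv.swap_apply_def]; split_ifs <;> simp_all
  have := h (Iso.completeGraph (Equiv.swap x y)) hswap x
  simp_all [Iso.completeGraph]

lemma countDist_eq_natCard {G : SimpleGraph V} {c : ℕ} {β : Type*}
    (F : {φ : V → Fin c // IsDist G φ} → β) (hF : Surjective F)
    (hF_eq : ∀ φ ψ, F φ = F ψ ↔ ∃ π : G ≃g G, ∀ v, φ.1 v = ψ.1 (π v)) :
    countDist G c = Nat.card β := by
  refine Nat.card_congr <|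
    Equiv.ofBijective (Quot.lift F fun φ ψ h => (hF_eq φ ψ).2 h) ⟨?_, ?_⟩
  · rintro ⟨φ⟩ ⟨ψ⟩ h
    exact Quot.sound ((hF_eq φ ψ).1 h)
  · intro b
    obtain ⟨φ, rfl⟩ := hF b
    exact ⟨Quot.mk _ φ, rfl⟩

theorem countDist_top [Fintype V] (c : ℕ) :
    countDist (⊤ : SimpleGraph V) c = c.choose (Fintype.card V) := by
  let F (φ : {φ : V → Fin c // IsDist ⊤ φ}) := colorSet φ.1 ((isDist_top_iff _).1 φ.2)
  rw [countDist_eq_natCard F ?_ ?_, Nat.card_eq_fintype_card, Fintype.card_finset_len,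
    Fintype.card_fin]
  · rintro ⟨s, hs⟩
    obtain ⟨φ, hφ, hrange⟩ := exists_injective_range_eq_of_card_eq hs
    refine ⟨⟨φ, (isDist_top_iff φ).2 hφ⟩, Subtype.ext (Finset.coe_injective ?_)⟩
    simp [F, colorSet, hrange]
  · rintro ⟨φ, hφ⟩ ⟨ψ, hψ⟩
    simp only [F, colorSet_inj]
    constructor
    · intro h
      obtain ⟨σ, hσ⟩ := exists_perm_apply_eq_of_range_eq ((isDist_top_iff _).1 hφ)
        ((isDist_top_iff _).1 hψ) h
      exact ⟨Iso.completeGraph σ, fun v => (hσ v).symm⟩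
    · rintro ⟨π, hπ⟩
      rw [show φ = ψ ∘ π from funext hπ, EquivLike.range_comp]

end Labelings

section Copies

variable {V α : Type*} {r : ℕ}

def copiesIso {G : SimpleGraph V} (τ : Equiv.Perm (Fin r)) (ε : Fin r → G ≃g G) :
    copies r G ≃g copies r G where
  toEquiv := Equiv.prodShear τ fun i => (ε i).toEquiv
  map_rel_iff' := by
    rintro ⟨i, x⟩ ⟨j, y⟩
    simp only [copies, Equiv.prodShear_apply, τ.injective.eq_iff]
    constructor <;> rintro ⟨rfl, h⟩
    · exact ⟨rfl, (ε i).map_adj_iff.1 h⟩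
    · exact ⟨rfl, (ε i).map_adj_iff.2 h⟩

@[simp]
lemma copiesIso_apply {G : SimpleGraph V} (τ : Equiv.Perm (Fin r)) (ε : Fin r → G ≃g G)
    (v : Fin r × V) : copiesIso τ ε v = (τ v.1, ε v.1 v.2) := rfl

lemma IsDist.copy {G : SimpleGraph V} {φ : Fin r × V → α} (hφ : IsDist (copies r G) φ)
    (i : Fin r) : IsDist G fun x => φ (i, x) := by
  intro σ hσ v
  let π := copiesIso 1 fun k => if k = i then σ else .refl
  have hπ : ∀ w, φ (π w) = φ w := by
    rintro ⟨k, x⟩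
    by_cases hk : k = i
    · subst hk; simpa [π] using hσ x
    · simp [π, hk]
  simpa [π] using hφ π hπ (i, v)

lemma IsDist.eq_of_copy_equiv {G : SimpleGraph V} {φ : Fin r × V → α}
    (hφ : IsDist (copies r G) φ) [Nonempty V] {i j : Fin r} (σ : G ≃g G)
    (hσ : ∀ x, φ (j, σ x) = φ (i, x)) : i = j := by
  let π := copiesIso (Equiv.swap i j) fun k =>
    if k = i then σ else if k = j then σ.symm else .refl
  have hπ : ∀ w, φ (π w) = φ w := by
    rintro ⟨k, x⟩
    by_cases hki : k = i
    · subst hki; simpa [π] using hσ x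
    by_cases hkj : k = j
    · subst hkj; simpa [π, hki, Ne.symm hki] using (hσ (σ.symm x)).symm
    · simp [π, hki, hkj, Equiv.swap_apply_of_ne_of_ne hki hkj]
  simpa [π] using (congrArg Prod.fst (hφ π hπ (i, Classical.arbitrary V))).symm

lemma fst_iso_copies_top_apply_eq
    (π : copies r (⊤ : SimpleGraph V) ≃g copies r (⊤ : SimpleGraph V))
    (i : Fin r) (x y : V) : (π (i, x)).1 = (π (i, y)).1 := by
  by_cases h : x = y
  · rw [h]
  · exact (π.map_adj_iff.2 (show (copies r ⊤).Adj (i, x) (i, y) from ⟨rfl, h⟩)).1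

lemma range_copy_subset_of_iso_copies_top {φ : Fin r × V → α}
    (π : copies r (⊤ : SimpleGraph V) ≃g copies r (⊤ : SimpleGraph V))
    (hπ : ∀ v, φ (π v) = φ v) (i : Fin r) (x : V) :
    (range fun y => φ (i, y)) ⊆ range fun y => φ ((π (i, x)).1, y) := by
  rintro _ ⟨y, rfl⟩
  refine ⟨(π (i, y)).2, ?_⟩
  change φ ((π (i, x)).1, (π (i, y)).2) = φ (i, y)
  rw [fst_iso_copies_top_apply_eq π i x y, ← hπ (i, y)]

theorem isDist_copies_top_iff [Nonempty V] (φ : Fin r × V → α) :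
    IsDist (copies r (⊤ : SimpleGraph V)) φ ↔
      (∀ i, Injective fun x => φ (i, x)) ∧ Injective fun i => range fun x => φ (i, x) := by
  constructor
  · intro hφ
    have hinj i := (isDist_top_iff _).1 (hφ.copy i)
    refine ⟨hinj, fun i j h => ?_⟩
    obtain ⟨σ, hσ⟩ := exists_perm_apply_eq_of_range_eq (hinj i) (hinj j) h
    exact hφ.eq_of_copy_equiv (Iso.completeGraph σ) hσ
  · rintro ⟨hinj, hrange⟩ π hπ ⟨i, x⟩
    have hπ_symm : ∀ v, φ (π.symm v) = φ v := fun v => by rw [← hπ, π.apply_symm_apply]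
    rcases hx : π (i, x) with ⟨j, z⟩
    have hsymm : π.symm (j, z) = (i, x) := by rw [← hx, π.symm_apply_apply]
    -- `π` maps copy `i` into copy `j` and `π.symm` maps it back: both use the same colours
    have hji : j = i := hrange <| Subset.antisymm
      (by simpa [hsymm] using range_copy_subset_of_iso_copies_top π.symm hπ_symm j z)
      (by simpa [hx] using range_copy_subset_of_iso_copies_top π hπ i x)
    exact Prod.ext hji (hinj i (by simpa [hx, hji] using hπ (i, x)))

variable [Fintype V] [Nonempty V]

theorem exists_isDist_copies_top_iff {c : ℕ} :
    (∃ φ : Fin r × V → Fin c, IsDist (copies r (⊤ : SimpleGraph V)) φ) ↔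
      r ≤ c.choose (Fintype.card V) := by
  constructor
  · rintro ⟨φ, hφ⟩
    obtain ⟨hinj, hrange⟩ := (isDist_copies_top_iff φ).1 hφ
    let f i := colorSet (fun x => φ (i, x)) (hinj i)
    have hf : Injective f := fun i j h => hrange ((colorSet_inj _ _).1 h)
    simpa [f] using Fintype.card_le_of_injective f hf
  · intro h
    obtain ⟨f⟩ : Nonempty (Fin r ↪ {s : Finset (Fin c) // s.card = Fintype.card V}) :=
      Function.Embedding.nonempty_of_card_le (by simpa using h)
    choose φ hφ hrange using fun i => exists_injective_range_eq_of_card_eq (f i).2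
    refine ⟨fun v => φ v.1 v.2, (isDist_copies_top_iff _).2 ⟨hφ, fun i j h => ?_⟩⟩
    exact f.injective <| Subtype.ext <| Finset.coe_injective <|
      (hrange i).symm.trans (h.trans (hrange j))

theorem distNum_copies_top (r : ℕ) :
    distNum (copies r (⊤ : SimpleGraph V)) =
      sInf {c : ℕ | r ≤ c.choose (Fintype.card V)} := by
  simp only [distNum, exists_isDist_copies_top_iff]

end Copies

theorem countDist_K2_and_dist_matching_general (r : ℕ) :
    (∀ c : ℕ, countDist (⊤ : SimpleGraph (Fin 2)) c = c.choose 2) ∧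
    (2 ≤ r →
      distNum (copies r (⊤ : SimpleGraph (Fin 2))) = sInf {c : ℕ | r ≤ c.choose 2}) :=
  ⟨fun c => by simpa using countDist_top (V := Fin 2) c,
    fun _ => by simpa using distNum_copies_top (V := Fin 2) r⟩

/-- The number of pairwise inequivalent distinguishing labelings of `K_2` using at most `c`
colors is `C(c, 2)`, and hence `D(rK_2) = min {c : C(c,2) ≥ r}` for `r ≥ 2`. -/
theorem countDist_K2_and_dist_matching (r : ℕ) (hr : 1 ≤ r) :
    (∀ c : ℕ, countDist (⊤ : SimpleGraph (Fin 2)) c = c.choose 2) ∧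
    (2 ≤ r →
      distNum (copies r (⊤ : SimpleGraph (Fin 2))) = sInf {c : ℕ | r ≤ c.choose 2}) :=
  countDist_K2_and_dist_matching_general r
end

section
/- Let J be a jellyfish graph with head H and legs isomorphic to the rooted tree L. If L is rigid (as a rooted tree), then Fix(J) = Fix(H); otherwise Fix(J) = |V(H)| · Fix(L). -/
open SimpleGraph
set_option linter.unusedSectionVars false
set_option maxHeartbeats 1000000

/-- A distinguishing labeling of the graph `G` rooted at `r`:
the only root-preserving automorphism preserving `φ` is the identity. -/
def IsRDist {V α : Type*} (G : SimpleGraph V) (r : V) (φ : V → α) : Prop :=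
  ∀ π : G ≃g G, π r = r → (∀ v, φ (π v) = φ v) → ∀ v, π v = v

/-- The distinguishing number of the graph `G` rooted at `r`. -/
noncomputable def rdistNum {V : Type*} (G : SimpleGraph V) (r : V) : ℕ :=
  sInf {c : ℕ | ∃ φ : V → Fin c, IsRDist G r φ}

/-- The number of pairwise inequivalent (under root-preserving automorphisms)
distinguishing labelings of the rooted graph `(G, r)` using at most `c` colors. -/
noncomputable def rcountDist {V : Type*} (G : SimpleGraph V) (r : V) (c : ℕ) : ℕ :=
  Nat.card (Quot (fun φ ψ : {φ : V → Fin c // IsRDist G r φ} =>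
    ∃ π : G ≃g G, π r = r ∧ ∀ v, φ.1 v = ψ.1 (π v)))

/-- `S` is a fixing set of the graph `G` rooted at `r` (w.r.t. root-preserving automorphisms). -/
def IsRFix {V : Type*} (G : SimpleGraph V) (r : V) (S : Set V) : Prop :=
  ∀ π : G ≃g G, π r = r → (∀ v ∈ S, π v = v) → ∀ v, π v = v

/-- The fixing number of the graph `G` rooted at `r`. -/
noncomputable def rfixNum {V : Type*} (G : SimpleGraph V) (r : V) : ℕ :=
  sInf {n : ℕ | ∃ S : Set V, S.ncard = n ∧ IsRFix G r S}

/-- A rooted isomorphism between `(G, r)` and `(H, s)`. -/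
def RootedIso {V W : Type*} (G : SimpleGraph V) (r : V) (H : SimpleGraph W) (s : W) : Prop :=
  ∃ e : G ≃g H, e r = s

/-- The jellyfish graph with head `H` and a copy of the rooted tree `(L, ρ)` attached
(by its root) at each vertex of `H`.  The leg at `a` is `{a} × B`, attached at `(a, ρ)`. -/
def jellyfish {A B : Type*} (H : SimpleGraph A) (L : SimpleGraph B) (ρ : B) :
    SimpleGraph (A × B) where
  Adj x y := (x.2 = ρ ∧ y.2 = ρ ∧ H.Adj x.1 y.1) ∨ (x.1 = y.1 ∧ L.Adj x.2 y.2)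
  symm := by
    constructor
    rintro ⟨a, b⟩ ⟨a', b'⟩ (⟨h1, h2, h3⟩ | ⟨h1, h2⟩)
    · exact Or.inl ⟨h2, h1, h3.symm⟩
    · exact Or.inr ⟨h1.symm, h2.symm⟩
  loopless := by
    constructor
    rintro ⟨a, b⟩ (⟨-, -, h⟩ | ⟨-, h⟩)
    · exact H.irrefl h
    · exact L.irrefl h

def HeadP {V : Type*} (G : SimpleGraph V) (v : V) : Prop :=
  ∃ w, G.Adj v w ∧ (G.deleteEdges {s(v, w)}).Reachable v w

def delHom {V W : Type*} {G : SimpleGraph V} {G' : SimpleGraph W} (π : G ≃g G') (v w : V) :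
    G.deleteEdges {s(v, w)} →g G'.deleteEdges {s(π v, π w)} where
  toFun x := π x
  map_rel' := by
    intro x y hxy
    rw [deleteEdges_adj] at hxy ⊢
    obtain ⟨hxy, hne⟩ := hxy
    refine ⟨π.map_adj_iff.mpr hxy, ?_⟩
    intro hmem
    rw [Set.mem_singleton_iff, Sym2.eq_iff] at hmem
    apply hne
    rw [Set.mem_singleton_iff, Sym2.eq_iff]
    rcases hmem with ⟨h1, h2⟩ | ⟨h1, h2⟩
    · exact Or.inl ⟨π.injective h1, π.injective h2⟩
    · exact Or.inr ⟨π.injective h1, π.injective h2⟩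

lemma headP_map {V W : Type*} {G : SimpleGraph V} {G' : SimpleGraph W} (π : G ≃g G') (v : V)
    (h : HeadP G v) : HeadP G' (π v) := by
  obtain ⟨w, hadj, hre⟩ := h
  refine ⟨π w, π.map_adj_iff.mpr hadj, ?_⟩
  exact hre.map (delHom π v w)

lemma headP_iff {V W : Type*} {G : SimpleGraph V} {G' : SimpleGraph W} (π : G ≃g G') (v : V) :
    HeadP G' (π v) ↔ HeadP G v := by
  refine ⟨fun h => ?_, headP_map π v⟩
  have := headP_map π.symm (π v) h
  simpa using this

section Jelly
variable {A B : Type*} [DecidableEq A] (H : SimpleGraph A) (L : SimpleGraph B) (ρ : B)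

/-- The embedding of the head into the jellyfish as a graph hom. -/
def headHom : H →g jellyfish H L ρ where
  toFun a := (a, ρ)
  map_rel' h := Or.inl ⟨rfl, rfl, h⟩

@[simp] lemma headHom_apply (a : A) : headHom H L ρ a = (a, ρ) := rfl

lemma headP_of_root (hH : ∃ (a : A) (p : H.Walk a a), p.IsHamiltonianCycle) (a : A) :
    HeadP (jellyfish H L ρ) (a, ρ) := by
  obtain ⟨a₀, p, hp⟩ := hH
  have ha : a ∈ p.support := hp.mem_support a
  set c := p.rotate a ha with hc
  have hcyc : c.IsCycle := hp.isCycle.rotate ha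
  cases hd : c with
  | nil => exact absurd (hc ▸ hd) hcyc.ne_nil
  | cons h q =>
    rename_i a'
    have hne : s(a, a') ∉ q.edges := by
      have := hcyc.edges_nodup
      rw [hd, Walk.edges_cons] at this
      exact (List.nodup_cons.mp this).1
    refine ⟨(a', ρ), Or.inl ⟨rfl, rfl, h⟩, ?_⟩
    have hq : ∀ e ∈ (q.map (headHom H L ρ)).edges, e ∉ ({s((a, ρ), (a', ρ))} : Set (Sym2 (A × B))) := by
      intro e he hmem
      rw [Set.mem_singleton_iff] at hmem
      rw [Walk.edges_map, List.mem_map] at he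
      obtain ⟨e', he', rfl⟩ := he
      apply hne
      have : Sym2.map (headHom H L ρ) s(a, a') = s((a, ρ), (a', ρ)) := by
        simp
      rw [← this] at hmem
      have hinj : Function.Injective (headHom H L ρ) := by
        intro x y hxy
        have : (x, ρ) = (y, ρ) := hxy
        exact (Prod.mk.injEq _ _ _ _).mp this |>.1
      have := Sym2.map.injective hinj hmem
      rwa [this] at he'
    exact ⟨(((q.map (headHom H L ρ)).toDeleteEdges _ hq).reverse)⟩

/-- If `ρ` is not in the component of `b` after deleting the leg edge `s(b,b')`, then
the corresponding edge of the jellyfish is a bridge. -/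
lemma no_reach (hL : L.IsTree) {a : A} {b b' : B} (hadj : L.Adj b b')
    (hρ : ¬ (L.deleteEdges {s(b, b')}).Reachable b ρ) :
    ¬ (jellyfish H L ρ |>.deleteEdges {s((a, b), (a, b'))}).Reachable (a, b) (a, b') := by
  set K := L.deleteEdges {s(b, b')} with hK
  have hbridge : ¬ K.Reachable b b' := by
    have hac := hL.IsAcyclic
    rw [isAcyclic_iff_forall_adj_isBridge] at hac
    exact isBridge_iff.mp (hac hadj)
  rintro ⟨p⟩
  set S : Set (A × B) := {x | x.1 = a ∧ K.Reachable b x.2} with hS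
  have hstart : (a, b) ∈ S := ⟨rfl, Reachable.refl b⟩
  have hend : (a, b') ∉ S := fun h => hbridge h.2
  obtain ⟨d, -, hdS, hdS'⟩ := p.exists_boundary_dart S hstart hend
  have hd : (jellyfish H L ρ |>.deleteEdges {s((a, b), (a, b'))}).Adj d.fst d.snd := d.adj
  rw [deleteEdges_adj] at hd
  obtain ⟨hdadj, hdne⟩ := hd
  obtain ⟨hfa, hfr⟩ := hdS
  have hfρ : d.fst.2 ≠ ρ := fun h => hρ (h ▸ hfr)
  rcases hdadj with ⟨h1, -, -⟩ | ⟨h1, h2⟩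
  · exact hfρ h1
  · -- leg edge
    have hsa : d.snd.1 = a := h1 ▸ hfa
    have hsnr : ¬ K.Reachable b d.snd.2 := fun h => hdS' ⟨hsa, h⟩
    have hedge : s(d.fst.2, d.snd.2) = s(b, b') := by
      by_contra hne
      exact hsnr (hfr.trans (Adj.reachable (by rw [hK, deleteEdges_adj]; exact ⟨h2, by rw [Set.mem_singleton_iff]; exact hne⟩)))
    rw [Sym2.eq_iff] at hedge
    rcases hedge with ⟨hb, hb'⟩ | ⟨hb, hb'⟩
    · apply hdne
      rw [Set.mem_singleton_iff]
      have e1 : d.fst = (a, b) := Prod.ext hfa hb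
      have e2 : d.snd = (a, b') := Prod.ext hsa hb'
      rw [e1, e2]
    · exact hbridge (hb ▸ hfr)

lemma root_of_headP (hL : L.IsTree) {a : A} {b : B}
    (h : HeadP (jellyfish H L ρ) (a, b)) : b = ρ := by
  by_contra hbρ
  obtain ⟨w, hadj, hre⟩ := h
  rcases hadj with ⟨h1, -, -⟩ | ⟨h1, h2⟩
  · exact hbρ h1
  · obtain ⟨a', b'⟩ := w
    dsimp at h1 h2
    subst h1
    by_cases hc : (L.deleteEdges {s(b, b')}).Reachable b ρ
    · -- delete-edge component of b' misses ρ
      have hbridge : ¬ (L.deleteEdges {s(b, b')}).Reachable b b' := by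
        have hac := hL.IsAcyclic
        rw [isAcyclic_iff_forall_adj_isBridge] at hac
        exact isBridge_iff.mp (hac h2)
      have hρ' : ¬ (L.deleteEdges {s(b', b)}).Reachable b' ρ := by
        rw [Sym2.eq_swap]
        intro h
        exact hbridge (hc.trans h.symm)
      have := no_reach H L ρ hL (a := a) h2.symm hρ'
      apply this
      have : ({s((a, b'), (a, b))} : Set (Sym2 (A × B))) = {s((a, b), (a, b'))} := by
        rw [Sym2.eq_swap]
      rw [this]
      exact hre.symm
    · exact no_reach H L ρ hL h2 hc hre

lemma headP_jelly (hH : ∃ (a : A) (p : H.Walk a a), p.IsHamiltonianCycle) (hL : L.IsTree)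
    (a : A) (b : B) : HeadP (jellyfish H L ρ) (a, b) ↔ b = ρ :=
  ⟨root_of_headP H L ρ hL, fun h => h ▸ headP_of_root H L ρ hH a⟩

variable {H L ρ} in
/-- Structure theorem: every automorphism of a jellyfish graph decomposes. -/
lemma jelly_master [Fintype A] [Fintype B]
    (hH : ∃ (a : A) (p : H.Walk a a), p.IsHamiltonianCycle) (hL : L.IsTree)
    (π : jellyfish H L ρ ≃g jellyfish H L ρ) :
    ∃ σ : H ≃g H, ∀ a : A, ∃ e : L ≃g L, e ρ = ρ ∧ ∀ b : B, π (a, b) = (σ a, e b) := by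
  -- heads go to heads
  have hhead : ∀ a b, (π (a, b)).2 = ρ ↔ b = ρ := by
    intro a b
    have hA := headP_iff π (a, b)
    have hB := headP_jelly H L ρ hH hL a b
    have hC := headP_jelly H L ρ hH hL (π (a, b)).1 (π (a, b)).2
    rw [Prod.mk.eta] at hC
    exact hC.symm.trans (hA.trans hB)
  -- first coordinate only depends on a
  have hstep : ∀ a : A, ∀ u u' : B, L.Adj u u' → (π (a, u)).1 = (π (a, u')).1 := by
    intro a u u' hu
    have : (jellyfish H L ρ).Adj (π (a, u)) (π (a, u')) := π.map_adj_iff.mpr (Or.inr ⟨rfl, hu⟩)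
    rcases this with ⟨h1, h2, -⟩ | ⟨h1, -⟩
    · rw [hhead] at h1 h2
      rw [h1, h2] at hu
      exact absurd hu (L.loopless.irrefl ρ)
    · exact h1
  have hfst : ∀ (a : A) (b : B), (π (a, b)).1 = (π (a, ρ)).1 := by
    have hwalk : ∀ (a : A) (u v : B) (w : L.Walk u v), (π (a, u)).1 = (π (a, v)).1 := by
      intro a u v w
      induction w with
      | nil => rfl
      | cons h q ih => exact (hstep a _ _ h).trans ih
    intro a b
    have := hL.isConnected.preconnected b ρ
    obtain ⟨w⟩ := this
    exact hwalk a b ρ w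
  classical
  have hπρ : ∀ a, π (a, ρ) = ((π (a, ρ)).1, ρ) := by
    intro a
    exact Prod.ext rfl ((hhead a ρ).mpr rfl)
  set σ₀ : A → A := fun a => (π (a, ρ)).1 with hσ₀
  have hσinj : Function.Injective σ₀ := by
    intro a a' h
    have key : ((π (a, ρ)).1, ρ) = ((π (a', ρ)).1, ρ) := by
      rw [show (π (a, ρ)).1 = (π (a', ρ)).1 from h]
    have := π.injective ((hπρ a).trans (key.trans (hπρ a').symm))
    exact ((Prod.mk.injEq _ _ _ _).mp this).1
  have hσbij : Function.Bijective σ₀ := Finite.injective_iff_bijective.mp hσinj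
  have hadjH : ∀ a a', H.Adj a a' ↔ H.Adj (σ₀ a) (σ₀ a') := by
    intro a a'
    have hmm := π.map_adj_iff (v := ((a, ρ) : A × B)) (w := ((a', ρ) : A × B))
    rw [hπρ a, hπρ a'] at hmm
    constructor
    · intro h
      have hj : (jellyfish H L ρ).Adj (σ₀ a, ρ) (σ₀ a', ρ) := hmm.mpr (Or.inl ⟨rfl, rfl, h⟩)
      rcases hj with ⟨-, -, h3⟩ | ⟨-, h4⟩
      · exact h3
      · exact absurd h4 (L.loopless.irrefl ρ)
    · intro h
      have hj := hmm.mp (Or.inl ⟨rfl, rfl, h⟩)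
      rcases hj with ⟨-, -, h3⟩ | ⟨-, h4⟩
      · exact h3
      · exact absurd h4 (L.loopless.irrefl ρ)
  refine ⟨⟨Equiv.ofBijective σ₀ hσbij, ?_⟩, ?_⟩
  · intro a a'
    exact (hadjH a a').symm
  intro a
  set τ : B → B := fun b => (π (a, b)).2 with hτ
  have hπab : ∀ b, π (a, b) = (σ₀ a, τ b) := fun b => Prod.ext (hfst a b) rfl
  have hτinj : Function.Injective τ := by
    intro b b' h
    have : π (a, b) = π (a, b') := by rw [hπab, hπab, h]
    have := π.injective this
    exact ((Prod.mk.injEq _ _ _ _).mp this).2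
  have hτbij : Function.Bijective τ := Finite.injective_iff_bijective.mp hτinj
  have hτρ : τ ρ = ρ := (hhead a ρ).mpr rfl
  have hadjL : ∀ b b', L.Adj b b' ↔ L.Adj (τ b) (τ b') := by
    intro b b'
    have hmm := π.map_adj_iff (v := ((a, b) : A × B)) (w := ((a, b') : A × B))
    rw [hπab, hπab] at hmm
    constructor
    · intro h
      have hj := hmm.mpr (Or.inr ⟨rfl, h⟩)
      rcases hj with ⟨h1, h2, -⟩ | ⟨-, h4⟩
      · have hb : b = ρ := (hhead a b).mp h1
        have hb' : b' = ρ := (hhead a b').mp h2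
        rw [hb, hb'] at h
        exact absurd h (L.loopless.irrefl ρ)
      · exact h4
    · intro h
      have hj := hmm.mp (Or.inr ⟨rfl, h⟩)
      rcases hj with ⟨h1, h2, -⟩ | ⟨-, h4⟩
      · have h1' : b = ρ := h1
        have h2' : b' = ρ := h2
        rw [h1', h2', hτρ] at h
        exact absurd h (L.loopless.irrefl ρ)
      · exact h4
  refine ⟨⟨Equiv.ofBijective τ hτbij, ?_⟩, hτρ, ?_⟩
  · intro b b'
    exact (hadjL b b').symm
  · intro b
    rw [hπab b]
    rfl

variable {H L ρ} in
/-- Extend an automorphism of the head to the jellyfish. -/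
def headExt (σ : H ≃g H) : jellyfish H L ρ ≃g jellyfish H L ρ where
  toEquiv := Equiv.prodCongr σ.toEquiv (Equiv.refl B)
  map_rel_iff' := by
    rintro ⟨a, b⟩ ⟨a', b'⟩
    show (jellyfish H L ρ).Adj (σ a, b) (σ a', b') ↔ _
    constructor
    · rintro (⟨h1, h2, h3⟩ | ⟨h1, h2⟩)
      · exact Or.inl ⟨h1, h2, σ.map_adj_iff.mp h3⟩
      · exact Or.inr ⟨σ.injective h1, h2⟩
    · rintro (⟨h1, h2, h3⟩ | ⟨h1, h2⟩)
      · exact Or.inl ⟨h1, h2, σ.map_adj_iff.mpr h3⟩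
      · exact Or.inr ⟨congrArg σ h1, h2⟩

variable {H L ρ} in
/-- Extend a root-preserving automorphism of one leg to the jellyfish. -/
def legExt (a : A) (e : L ≃g L) (he : e ρ = ρ) : jellyfish H L ρ ≃g jellyfish H L ρ where
  toEquiv :=
    { toFun := fun x => (x.1, if x.1 = a then e x.2 else x.2)
      invFun := fun x => (x.1, if x.1 = a then e.symm x.2 else x.2)
      left_inv := by
        rintro ⟨x, y⟩
        by_cases h : x = a <;> simp [h]
      right_inv := by
        rintro ⟨x, y⟩
        by_cases h : x = a <;> simp [h] }
  map_rel_iff' := by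
    rintro ⟨x, y⟩ ⟨x', y'⟩
    show (jellyfish H L ρ).Adj (x, if x = a then e y else y) (x', if x' = a then e y' else y') ↔
      (jellyfish H L ρ).Adj (x, y) (x', y')
    have hkey : ∀ (z : A) (w : B), ((if z = a then e w else w) = ρ) ↔ w = ρ := by
      intro z w
      by_cases h : z = a <;> simp [h]
      constructor
      · intro hw
        have := e.injective (hw.trans he.symm)
        exact this
      · rintro rfl; exact he
    constructor
    · rintro (⟨h1, h2, h3⟩ | ⟨h1, h2⟩)
      · exact Or.inl ⟨(hkey x y).mp h1, (hkey x' y').mp h2, h3⟩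
      · have h1' : x = x' := h1
        refine Or.inr ⟨h1', ?_⟩
        by_cases h : x = a
        · rw [if_pos h, if_pos (h1' ▸ h)] at h2
          exact e.map_adj_iff.mp h2
        · rwa [if_neg h, if_neg (h1' ▸ h)] at h2
    · rintro (⟨h1, h2, h3⟩ | ⟨h1, h2⟩)
      · exact Or.inl ⟨(hkey x y).mpr h1, (hkey x' y').mpr h2, h3⟩
      · have h1' : x = x' := h1
        refine Or.inr ⟨h1', ?_⟩
        by_cases h : x = a
        · rw [if_pos h, if_pos (h1' ▸ h)]
          exact e.map_adj_iff.mpr h2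
        · rw [if_neg h, if_neg (h1' ▸ h)]
          exact h2

end Jelly

lemma exists_optimal_fixing {V : Type*} (G : SimpleGraph V) :
    ∃ S : Set V, S.ncard = fixNum G ∧ IsFixingSet G S := by
  have hne : {n : ℕ | ∃ S : Set V, S.ncard = n ∧ IsFixingSet G S}.Nonempty :=
    ⟨(Set.univ : Set V).ncard, Set.univ, rfl, fun π h v => h v trivial⟩
  exact Nat.sInf_mem hne

lemma exists_optimal_rfixing {V : Type*} (G : SimpleGraph V) (r : V) :
    ∃ S : Set V, S.ncard = rfixNum G r ∧ IsRFix G r S := by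
  have hne : {n : ℕ | ∃ S : Set V, S.ncard = n ∧ IsRFix G r S}.Nonempty :=
    ⟨(Set.univ : Set V).ncard, Set.univ, rfl, fun π _ h v => h v trivial⟩
  exact Nat.sInf_mem hne

lemma fixNum_le {V : Type*} {G : SimpleGraph V} {S : Set V} (h : IsFixingSet G S) :
    fixNum G ≤ S.ncard :=
  Nat.sInf_le ⟨S, rfl, h⟩

lemma rfixNum_le {V : Type*} {G : SimpleGraph V} {r : V} {S : Set V} (h : IsRFix G r S) :
    rfixNum G r ≤ S.ncard :=
  Nat.sInf_le ⟨S, rfl, h⟩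

section Assembly
variable {A B : Type*} [DecidableEq A] [Fintype A] [Fintype B]
  {H : SimpleGraph A} {L : SimpleGraph B} {ρ : B}

/-- `Fix(H) ≤ Fix(J)`. -/
lemma fixNum_head_le : fixNum H ≤ fixNum (jellyfish H L ρ) := by
  obtain ⟨S, hcard, hfix⟩ := exists_optimal_fixing (jellyfish H L ρ)
  have hfix1 : IsFixingSet H (Prod.fst '' S) := by
    intro σ hσ a
    have hPi : ∀ v ∈ S, (headExt (L := L) (ρ := ρ) σ) v = v := by
      intro v hv
      show (σ v.1, v.2) = v
      have h1 : σ v.1 = v.1 := hσ v.1 ⟨v, hv, rfl⟩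
      rw [h1]
    have h2 : (σ a, ρ) = (a, ρ) := hfix (headExt σ) hPi (a, ρ)
    exact ((Prod.mk.injEq _ _ _ _).mp h2).1
  calc fixNum H ≤ (Prod.fst '' S).ncard := fixNum_le hfix1
    _ ≤ S.ncard := Set.ncard_image_le S.toFinite
    _ = fixNum (jellyfish H L ρ) := hcard

/-- Rigid case: `Fix(J) ≤ Fix(H)`. -/
lemma fixNum_le_head (hH : ∃ (a : A) (p : H.Walk a a), p.IsHamiltonianCycle) (hL : L.IsTree)
    (hrigid : ∀ e : L ≃g L, e ρ = ρ → ∀ b, e b = b) :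
    fixNum (jellyfish H L ρ) ≤ fixNum H := by
  obtain ⟨SH, hcard, hfixH⟩ := exists_optimal_fixing H
  have hfixJ : IsFixingSet (jellyfish H L ρ) ((fun s => (s, ρ)) '' SH) := by
    intro π hπ
    obtain ⟨σ, hσ⟩ := jelly_master hH hL π
    have hfixσ : ∀ s ∈ SH, σ s = s := by
      intro s hs
      have h1 : π (s, ρ) = (s, ρ) := hπ (s, ρ) ⟨s, hs, rfl⟩
      obtain ⟨e, heρ, hab⟩ := hσ s
      rw [hab ρ, heρ] at h1
      exact ((Prod.mk.injEq _ _ _ _).mp h1).1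
    have hid : ∀ a, σ a = a := hfixH σ hfixσ
    rintro ⟨a, b⟩
    obtain ⟨e, heρ, hab⟩ := hσ a
    rw [hab b, hid a, hrigid e heρ b]
  calc fixNum (jellyfish H L ρ) ≤ ((fun s => (s, ρ)) '' SH).ncard := fixNum_le hfixJ
    _ = SH.ncard := Set.ncard_image_of_injective SH (fun x y h => ((Prod.mk.injEq _ _ _ _).mp h).1)
    _ = fixNum H := hcard

/-- Non-rigid case, upper bound. -/
lemma fixNum_le_legs (hH : ∃ (a : A) (p : H.Walk a a), p.IsHamiltonianCycle) (hL : L.IsTree)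
    (hnr : ¬ (∀ e : L ≃g L, e ρ = ρ → ∀ b, e b = b)) :
    fixNum (jellyfish H L ρ) ≤ Fintype.card A * rfixNum L ρ := by
  obtain ⟨T, hTcard, hTfix⟩ := exists_optimal_rfixing L ρ
  have hTpos : T.Nonempty := by
    rw [Set.nonempty_iff_ne_empty]
    rintro rfl
    exact hnr fun e he => hTfix e he (fun v hv => absurd hv (Set.notMem_empty v))
  have hfixJ : IsFixingSet (jellyfish H L ρ) {x : A × B | x.2 ∈ T} := by
    intro π hπ
    obtain ⟨σ, hσ⟩ := jelly_master hH hL π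
    have hid : ∀ a, ∀ b, π (a, b) = (a, b) := by
      intro a
      obtain ⟨e, heρ, hab⟩ := hσ a
      obtain ⟨t, ht⟩ := hTpos
      have h1 : π (a, t) = (a, t) := hπ (a, t) ht
      rw [hab t] at h1
      have hσa : σ a = a := ((Prod.mk.injEq _ _ _ _).mp h1).1
      have hefix : ∀ v ∈ T, e v = v := by
        intro v hv
        have h2 : π (a, v) = (a, v) := hπ (a, v) hv
        rw [hab v] at h2
        exact ((Prod.mk.injEq _ _ _ _).mp h2).2
      have heid : ∀ b, e b = b := hTfix e heρ hefix
      intro b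
      rw [hab b, hσa, heid b]
    rintro ⟨a, b⟩
    exact hid a b
  have hcard : ({x : A × B | x.2 ∈ T}).ncard = Fintype.card A * rfixNum L ρ := by
    have he : {x : A × B | x.2 ∈ T} ≃ A × T :=
      { toFun := fun x => (x.1.1, ⟨x.1.2, x.2⟩)
        invFun := fun p => ⟨(p.1, p.2.1), p.2.2⟩
        left_inv := fun x => rfl
        right_inv := fun p => rfl }
    rw [← Nat.card_coe_set_eq, Nat.card_congr he, Nat.card_prod,
      Nat.card_eq_fintype_card, Nat.card_coe_set_eq, hTcard]
  calc fixNum (jellyfish H L ρ) ≤ ({x : A × B | x.2 ∈ T}).ncard := fixNum_le hfixJ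
    _ = Fintype.card A * rfixNum L ρ := hcard

/-- Lower bound: `|A| * rFix(L) ≤ Fix(J)`. -/
lemma legs_le_fixNum : Fintype.card A * rfixNum L ρ ≤ fixNum (jellyfish H L ρ) := by
  classical
  obtain ⟨S, hcard, hfix⟩ := exists_optimal_fixing (jellyfish H L ρ)
  have hTfix : ∀ a : A, IsRFix L ρ {b : B | (a, b) ∈ S} := by
    intro a e heρ hefix
    have hPi : ∀ v ∈ S, (legExt (H := H) a e heρ) v = v := by
      rintro ⟨x, y⟩ hv
      show (x, if x = a then e y else y) = (x, y)
      by_cases h : x = a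
      · subst h
        rw [if_pos rfl, hefix y hv]
      · rw [if_neg h]
    intro b
    have h1 : (legExt (H := H) a e heρ) (a, b) = (a, b) := hfix (legExt a e heρ) hPi (a, b)
    have h2 : ((a : A), if a = a then e b else b) = (a, b) := h1
    rw [if_pos rfl] at h2
    exact ((Prod.mk.injEq _ _ _ _).mp h2).2
  have hsum : S.ncard = ∑ a : A, ({b : B | (a, b) ∈ S}).ncard := by
    have he : S ≃ Σ a : A, {b : B | (a, b) ∈ S} :=
      { toFun := fun x => ⟨x.1.1, x.1.2, x.2⟩
        invFun := fun p => ⟨(p.1, p.2.1), p.2.2⟩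
        left_inv := fun x => rfl
        right_inv := fun p => rfl }
    haveI : ∀ a : A, Fintype ({b : B | (a, b) ∈ S}) := fun a => Fintype.ofFinite _
    haveI : Fintype S := Fintype.ofFinite _
    rw [← Nat.card_coe_set_eq, Nat.card_congr he, Nat.card_eq_fintype_card,
      Fintype.card_sigma]
    congr 1
    funext a
    rw [← Nat.card_coe_set_eq, Nat.card_eq_fintype_card]
  rw [← hcard, hsum]
  calc Fintype.card A * rfixNum L ρ = ∑ _a : A, rfixNum L ρ := by
        rw [Finset.sum_const, Finset.card_univ, smul_eq_mul]
    _ ≤ ∑ a : A, ({b : B | (a, b) ∈ S}).ncard :=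
        Finset.sum_le_sum fun a _ => rfixNum_le (hTfix a)

end Assembly

/-- For a jellyfish graph `J` with head `H` and legs isomorphic to the rooted tree `(L, ρ)`:
if `L` is rigid as a rooted tree then `Fix(J) = Fix(H)`,
and otherwise `Fix(J) = |V(H)| * Fix(L)`. -/
theorem fix_jellyfish {A B : Type*} [Fintype A] [DecidableEq A] [Fintype B]
    (H : SimpleGraph A) (L : SimpleGraph B) (ρ : B)
    (hH : ∃ (a : A) (p : H.Walk a a), p.IsHamiltonianCycle) (hL : L.IsTree) :
    ((∀ e : L ≃g L, e ρ = ρ → ∀ b, e b = b) →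
        fixNum (jellyfish H L ρ) = fixNum H) ∧
    (¬ (∀ e : L ≃g L, e ρ = ρ → ∀ b, e b = b) →
        fixNum (jellyfish H L ρ) = Fintype.card A * rfixNum L ρ) := by
  constructor
  · intro hrigid
    exact le_antisymm (fixNum_le_head hH hL hrigid) fixNum_head_le
  · intro hnr
    exact le_antisymm (fixNum_le_legs hH hL hnr) legs_le_fixNum
end
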